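/- For any AF Γ and C ⊆ A, every admissible set of Γ contained in C extends to a complete extension of Γ in C, hence preferred extensions of Γ in C (maximal complete extensions in C) exist. -/

import Mathlib

variable {α : Type*}

def conflictFree (att : α → α → Prop) (T : Set α) : Prop :=
  ∀ a ∈ T, ∀ b ∈ T, ¬ att a b

def acceptable (att : α → α → Prop) (T : Set α) (a : α) : Prop :=
  ∀ b, att b a → ∃ c ∈ T, att c b

def admissible (att : α → α → Prop) (T : Set α) : Prop :=
  conflictFree att T ∧ ∀ a ∈ T, acceptable att T a

/-- admissible set of Γ in C -/
def admissibleInC (att : α → α → Prop) (C E : Set α) : Prop :=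
  admissible att E ∧ E ⊆ C

/-- complete extension of Γ in C -/
def completeInC (att : α → α → Prop) (C E : Set α) : Prop :=
  admissibleInC att C E ∧ ∀ a ∈ C, acceptable att E a → a ∈ E

/-- preferred extension of Γ in C -/
def preferredInC (att : α → α → Prop) (C E : Set α) : Prop :=
  completeInC att C E ∧ ∀ U, completeInC att C U → E ⊆ U → U = E

/-! In a finite framework, enlarge `E` to a maximal admissible set inside `C`. By Dung's
fundamental lemma, adding an argument of `C` acceptable w.r.t. an admissible set keeps it
admissible, so maximality forces every such argument to be in already: the set is complete in
`C`. Complete extensions in `C` thus exist, and a maximal one among them is preferred. -/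

section

variable {att : α → α → Prop} {C T : Set α}

lemma acceptable_mono {T' : Set α} (h : T ⊆ T') {a : α} (ha : acceptable att T a) :
    acceptable att T' a :=
  fun b hb => let ⟨c, hc, hcb⟩ := ha b hb; ⟨c, h hc, hcb⟩

lemma conflictFree_insert {a : α} (hT : admissible att T) (ha : acceptable att T a) :
    conflictFree att (insert a T) := by
  obtain ⟨hcf, hdef⟩ := hT
  -- every attack between `a` and `T` is counter-attacked from `T`, contradicting `hcf`
  rintro b (rfl | hb) c (rfl | hc) hatt
  · obtain ⟨d, hd, hdb⟩ := ha _ hatt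
    obtain ⟨e, he, hed⟩ := ha _ hdb
    exact hcf e he d hd hed
  · obtain ⟨d, hd, hda⟩ := hdef c hc _ hatt
    obtain ⟨e, he, hed⟩ := ha d hda
    exact hcf e he d hd hed
  · obtain ⟨d, hd, hdb⟩ := ha _ hatt
    exact hcf d hd b hb hdb
  · exact hcf b hb c hc hatt

lemma admissible_insert {a : α} (hT : admissible att T) (ha : acceptable att T a) :
    admissible att (insert a T) := by
  refine ⟨conflictFree_insert hT ha, ?_⟩
  rintro b (rfl | hb)
  · exact acceptable_mono (Set.subset_insert _ T) ha
  · exact acceptable_mono (Set.subset_insert _ T) (hT.2 b hb)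

lemma completeInC_of_maximal (hT : Maximal (admissibleInC att C) T) : completeInC att C T := by
  refine ⟨hT.prop, fun a haC ha => ?_⟩
  have hins : admissibleInC att C (insert a T) :=
    ⟨admissible_insert hT.prop.1 ha, Set.insert_subset haC hT.prop.2⟩
  exact hT.2 hins (Set.subset_insert a T) (Set.mem_insert a T)

lemma preferredInC_of_maximal (hT : Maximal (completeInC att C) T) : preferredInC att C T :=
  ⟨hT.prop, fun _ hU hTU => (hT.2 hU hTU).antisymm hTU⟩

end

theorem admissibleInC_extends [Fintype α] (att : α → α → Prop) (C E : Set α)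
    (hE : admissibleInC att C E) :
    (∃ T : Set α, completeInC att C T ∧ E ⊆ T) ∧
    ∃ P : Set α, preferredInC att C P := by
  obtain ⟨T, hET, hT⟩ := Finite.exists_le_maximal hE
  have hTcomplete := completeInC_of_maximal hT
  obtain ⟨P, -, hP⟩ := Finite.exists_le_maximal hTcomplete
  exact ⟨⟨T, hTcomplete, hET⟩, P, preferredInC_of_maximal hP⟩
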